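/- arXiv:1708.00291 — 2 statements merged into one kernel-verified Lean document; each statement's English description precedes it below -/
import Mathlib

section
/- Let G be a finite induced subgraph of the unit distance graph of (ℝⁿ, ‖·‖), with vertex set V ⊆ ℝⁿ. Then m₁(ℝⁿ, ‖·‖) ≤ α(G)/|V|, where α(G) is the independence number of G. -/
open MeasureTheory Filter Set Pointwise

noncomputable def box (n : ℕ) (R : ℝ) : Set (Fin n → ℝ) := {x | ∀ i, |x i| ≤ R}

noncomputable def density (n : ℕ) (A : Set (Fin n → ℝ)) : ℝ :=
  Filter.limsup (fun R : ℝ =>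
    (volume (A ∩ box n R)).toReal / (volume (box n R)).toReal) Filter.atTop

def AvoidsOne (n : ℕ) (N : (Fin n → ℝ) → ℝ) (A : Set (Fin n → ℝ)) : Prop :=
  ∀ x ∈ A, ∀ y ∈ A, N (x - y) ≠ 1

noncomputable def m1 (n : ℕ) (N : (Fin n → ℝ) → ℝ) : ℝ :=
  sSup {d : ℝ | ∃ A : Set (Fin n → ℝ), MeasurableSet A ∧ AvoidsOne n N A ∧ d = density n A}

noncomputable def polyNorm (n : ℕ) (P : Set (Fin n → ℝ)) (x : Fin n → ℝ) : ℝ :=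
  sInf {l : ℝ | 0 ≤ l ∧ x ∈ l • P}

def IsSymmPolytope (n : ℕ) (P : Set (Fin n → ℝ)) : Prop :=
  Convex ℝ P ∧ (∀ x ∈ P, -x ∈ P) ∧ ∃ F : Finset (Fin n → ℝ), P = convexHull ℝ (↑F : Set (Fin n → ℝ))

def TilesBy (n : ℕ) (P : Set (Fin n → ℝ)) (Λ : Set (Fin n → ℝ)) : Prop :=
  (⋃ l ∈ Λ, (l +ᵥ P)) = Set.univ ∧
  (Λ.Pairwise fun a b => interior (a +ᵥ P) ∩ interior (b +ᵥ P) = ∅)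

/-!
If `A` avoids distance `1`, then for every `x` the vertices `v ∈ V` with `x + v ∈ A` form an
independent set of `G`, so at most `α(G)` of the translates `A - v` cover any given point.
Integrating over a box of side `2(R + M)`, where `V ⊆ [-M, M]ⁿ`, gives
`|V| · vol(A ∩ [-R, R]ⁿ) ≤ α(G) · vol([-R-M, R+M]ⁿ)`, and the ratio of the two box volumes
tends to `1` as `R → ∞`.
-/

open Topology

lemma sum_measure_le_mul_measure_univ {α ι : Type*} [MeasurableSpace α] (μ : Measure α)
    {V : Finset ι} {s : ι → Set α} (hs : ∀ i ∈ V, MeasurableSet (s i)) {a : ℕ}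
    (h : ∀ x (S : Finset ι), S ⊆ V → (∀ i ∈ S, x ∈ s i) → S.card ≤ a) :
    ∑ i ∈ V, μ (s i) ≤ a * μ univ := by
  classical
  have hpoint : ∀ x, ∑ i ∈ V, (s i).indicator 1 x ≤ (a : ENNReal) := fun x => by
    simp only [indicator_apply, Pi.one_apply, Finset.sum_boole]
    exact_mod_cast h x _ (Finset.filter_subset _ V) fun i hi => (Finset.mem_filter.1 hi).2
  calc ∑ i ∈ V, μ (s i) = ∫⁻ x, ∑ i ∈ V, (s i).indicator 1 x ∂μ := by
        rw [lintegral_finsetSum _ fun i hi => measurable_one.indicator (hs i hi)]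
        exact Finset.sum_congr rfl fun i hi => (lintegral_indicator_one (hs i hi)).symm
    _ ≤ ∫⁻ _, (a : ENNReal) ∂μ := lintegral_mono hpoint
    _ = a * μ univ := lintegral_const _

lemma box_eq_pi (n : ℕ) (R : ℝ) : box n R = univ.pi fun _ => Icc (-R) R := by
  ext x
  simp only [box, mem_ofPred_eq, mem_univ_pi, mem_Icc, abs_le]

lemma isCompact_box (n : ℕ) (R : ℝ) : IsCompact (box n R) := by
  rw [box_eq_pi]
  exact isCompact_univ_pi fun _ => isCompact_Icc

lemma closedBall_zero_subset_box (n : ℕ) (R : ℝ) :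
    Metric.closedBall (0 : Fin n → ℝ) R ⊆ box n R :=
  fun x hx i => (norm_le_pi_norm x i).trans (mem_closedBall_zero_iff.1 hx)

lemma exists_forall_mem_box {n : ℕ} (V : Finset (Fin n → ℝ)) : ∃ M, ∀ v ∈ V, v ∈ box n M := by
  obtain ⟨M, hM⟩ := (Metric.isBounded_iff_subset_closedBall 0).1 V.finite_toSet.isBounded
  exact ⟨M, fun v hv => closedBall_zero_subset_box n M (hM hv)⟩

lemma toReal_volume_box (n : ℕ) {R : ℝ} (hR : 0 ≤ R) :
    (volume (box n R)).toReal = (2 * R) ^ n := by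
  rw [box_eq_pi, volume_pi_pi]
  simp [Real.volume_Icc, hR]
  ring

lemma tendsto_toReal_volume_box_add_div (n : ℕ) (M : ℝ) :
    Tendsto (fun R => (volume (box n (R + M))).toReal / (volume (box n R)).toReal) atTop
      (𝓝 1) := by
  have hquot : Tendsto (fun R : ℝ => 1 + M / R) atTop (𝓝 1) := by
    simpa using (tendsto_const_nhds (x := (1 : ℝ))).add
      ((tendsto_const_nhds (x := M)).div_atTop tendsto_id)
  have hpow := hquot.pow n
  rw [one_pow] at hpow
  refine hpow.congr' ?_
  filter_upwards [eventually_gt_atTop 0, eventually_ge_atTop (-M)] with R hR hRM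
  rw [toReal_volume_box n hR.le, toReal_volume_box n (by linarith), ← div_pow,
    mul_div_mul_left _ _ two_ne_zero, add_div, div_self hR.ne']

lemma mem_box_add_of_add_mem_box {n : ℕ} {x v : Fin n → ℝ} {R M : ℝ} (hx : x + v ∈ box n R)
    (hv : v ∈ box n M) :
    x ∈ box n (R + M) := fun i => by
  have hxi := abs_le.1 (hx i)
  have hvi := abs_le.1 (hv i)
  simp only [Pi.add_apply] at hxi
  exact abs_le.2 ⟨by linarith, by linarith⟩

section Density

variable {n : ℕ} {A : Set (Fin n → ℝ)}

lemma volume_inter_box_le_preimage_add {v : Fin n → ℝ} {R M : ℝ} (hv : v ∈ box n M) :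
    volume (A ∩ box n R) ≤ volume ((· + v) ⁻¹' A ∩ box n (R + M)) := by
  rw [← measure_preimage_add_right volume v]
  exact measure_mono fun x ⟨hxA, hxR⟩ => ⟨hxA, mem_box_add_of_add_mem_box hxR hv⟩

lemma card_mul_volume_inter_box_le {N : (Fin n → ℝ) → ℝ} (hA : MeasurableSet A)
    (hAN : AvoidsOne n N A) {V : Finset (Fin n → ℝ)} {M : ℝ} (hVM : ∀ v ∈ V, v ∈ box n M)
    {a : ℕ} (ha : ∀ S ⊆ V, (∀ x ∈ S, ∀ y ∈ S, N (x - y) ≠ 1) → S.card ≤ a) (R : ℝ) :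
    V.card * volume (A ∩ box n R) ≤ a * volume (box n (R + M)) := by
  have hmeas : ∀ v ∈ V, MeasurableSet ((· + v) ⁻¹' A) := fun v _ =>
    hA.preimage (measurable_add_const v)
  calc V.card * volume (A ∩ box n R) = ∑ _v ∈ V, volume (A ∩ box n R) := by
        rw [Finset.sum_const, nsmul_eq_mul]
    _ ≤ ∑ v ∈ V, volume.restrict (box n (R + M)) ((· + v) ⁻¹' A) :=
        Finset.sum_le_sum fun v hv =>
          (volume_inter_box_le_preimage_add (hVM v hv)).trans_eq
            (Measure.restrict_apply (hmeas v hv)).symm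
    _ ≤ a * volume.restrict (box n (R + M)) univ :=
        sum_measure_le_mul_measure_univ _ hmeas fun x S hSV hxS =>
          ha S hSV fun v hv w hw => by simpa using hAN _ (hxS v hv) _ (hxS w hw)
    _ = a * volume (box n (R + M)) := by rw [Measure.restrict_apply_univ]

lemma density_le_of_card_mul_volume_le {k a : ℕ} (hk : 0 < k) {M : ℝ}
    (h : ∀ R, k * volume (A ∩ box n R) ≤ a * volume (box n (R + M))) :
    density n A ≤ a / k := by
  have hbound : ∀ R, (volume (A ∩ box n R)).toReal / (volume (box n R)).toReal ≤
      a / k * ((volume (box n (R + M))).toReal / (volume (box n R)).toReal) := fun R => by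
    have hfin := ((isCompact_box n (R + M)).measure_lt_top (μ := volume)).ne
    have hR := ENNReal.toReal_mono (ENNReal.mul_ne_top (ENNReal.natCast_ne_top a) hfin) (h R)
    simp only [ENNReal.toReal_mul, ENNReal.toReal_natCast] at hR
    rw [← mul_div_assoc]
    gcongr
    rw [div_mul_eq_mul_div, le_div_iff₀ (by exact_mod_cast hk)]
    linarith
  have hlim := (tendsto_toReal_volume_box_add_div n M).const_mul ((a : ℝ) / k)
  rw [mul_one] at hlim
  calc density n A ≤ limsup (fun R => a / k *
        ((volume (box n (R + M))).toReal / (volume (box n R)).toReal)) atTop :=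
        limsup_le_limsup (Eventually.of_forall hbound)
          (isCoboundedUnder_le_of_le atTop fun _ => by positivity) hlim.isBoundedUnder_le
    _ = a / k := hlim.limsup_eq

end Density

theorem m1_le_independence_ratio_of_finite_subgraph_general
    (n : ℕ) (N : (Fin n → ℝ) → ℝ)
    (V : Finset (Fin n → ℝ)) (hV : V.Nonempty) (a : ℕ)
    (ha : IsGreatest
      {k : ℕ | ∃ S ⊆ V, (∀ x ∈ S, ∀ y ∈ S, N (x - y) ≠ 1) ∧ S.card = k} a) :
    m1 n N ≤ (a : ℝ) / V.card := by
  obtain ⟨M, hVM⟩ := exists_forall_mem_box V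
  refine Real.sSup_le ?_ (by positivity)
  rintro _ ⟨A, hA, hAN, rfl⟩
  exact density_le_of_card_mul_volume_le hV.card_pos fun R =>
    card_mul_volume_inter_box_le hA hAN hVM (fun S hSV hS => ha.2 ⟨S, hSV, hS, rfl⟩) R

theorem m1_le_independence_ratio_of_finite_subgraph
    (n : ℕ) (N : (Fin n → ℝ) → ℝ)
    (hN0 : ∀ x, 0 ≤ N x) (hNdef : ∀ x, N x = 0 ↔ x = 0)
    (hNsmul : ∀ (c : ℝ) (x), N (c • x) = |c| * N x)
    (hNadd : ∀ x y, N (x + y) ≤ N x + N y)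
    (V : Finset (Fin n → ℝ)) (hV : V.Nonempty) (a : ℕ)
    (ha : IsGreatest
      {k : ℕ | ∃ S ⊆ V, (∀ x ∈ S, ∀ y ∈ S, N (x - y) ≠ 1) ∧ S.card = k} a) :
    m1 n N ≤ (a : ℝ) / V.card :=
  m1_le_independence_ratio_of_finite_subgraph_general n N V hV a ha
end

section
/- The vertices of the Voronoï region of the lattice A_n, namely the orthogonal projections p_H(u) for u ∈ {0,1}^{n+1} \ {0, (1,…,1)}, span over ℤ the dual lattice A_n^# = p_H(ℤ^{n+1}). -/
/-!
Since `pH` is linear, `pH(ℤ^{n+1})` is the `ℤ`-span of the `pH eᵢ`. Each `eᵢ` is a 0/1-vector, and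
the two 0/1-vectors excluded from `V₀` project to `0`, so the vertices span the same lattice.
For the duality, pairing with `x ∈ Aₙ` cannot see the constant correction term of `pH`, so
`pH(ℤ^{n+1}) ⊆ Aₙ^#`. Conversely, if `y ∈ H` pairs integrally with the roots `eᵢ - e₀`, then
`y - y₀·(1,…,1)` is an integer vector whose projection is `y`.
-/

open Set Filter MeasureTheory Pointwise

/-- The hyperplane `H = {x ∈ ℝ^{n+1} : ∑ xᵢ = 0}`. -/
def Hset (n : ℕ) : Set (Fin (n + 1) → ℝ) := {x | ∑ i, x i = 0}

/-- The root lattice `Aₙ = ℤ^{n+1} ∩ H`. -/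
def Alat (n : ℕ) : Set (Fin (n + 1) → ℝ) :=
  {x | (∀ i, ∃ m : ℤ, x i = (m : ℝ)) ∧ ∑ i, x i = 0}

/-- The Voronoï region of `Aₙ` inside `H`. -/
def VorAn (n : ℕ) : Set (Fin (n + 1) → ℝ) :=
  {z | z ∈ Hset n ∧ ∀ x ∈ Alat n, ∑ i, (z i) ^ 2 ≤ ∑ i, (z i - x i) ^ 2}

/-- Orthogonal projection of `ℝ^{n+1}` onto the hyperplane `H`. -/
noncomputable def pH (n : ℕ) (u : Fin (n + 1) → ℝ) : Fin (n + 1) → ℝ :=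
  fun i => u i - (∑ j, u j) / (n + 1)

/-- `V₀ = {0,1}^{n+1} \ {0, (1,…,1)}`. -/
def V0set (n : ℕ) : Set (Fin (n + 1) → ℝ) :=
  {u | (∀ i, u i = 0 ∨ u i = 1) ∧ u ≠ 0 ∧ u ≠ fun _ => 1}

/-- The vertex set of the Voronoï region of `Aₙ`. -/
noncomputable def VPAn (n : ℕ) : Set (Fin (n + 1) → ℝ) := pH n '' V0set n

open Matrix

section Projection

variable {n : ℕ}

noncomputable def pHₗ (n : ℕ) : (Fin (n + 1) → ℝ) →ₗ[ℝ] (Fin (n + 1) → ℝ) where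
  toFun := pH n
  map_add' u v := by
    funext i
    simp only [pH, Pi.add_apply, Finset.sum_add_distrib]
    ring
  map_smul' c u := by
    funext i
    simp only [pH, Pi.smul_apply, smul_eq_mul, RingHom.id_apply, ← Finset.mul_sum]
    ring

@[simp]
lemma coe_pHₗ : ⇑(pHₗ n) = pH n := rfl

lemma sum_pH (u : Fin (n + 1) → ℝ) : ∑ i, pH n u i = 0 := by
  simp only [pH, Finset.sum_sub_distrib, Finset.sum_const, Finset.card_univ, Fintype.card_fin,
    nsmul_eq_mul]
  field_simp
  push_cast
  ring

lemma pH_eq_self_of_sum_eq_zero {u : Fin (n + 1) → ℝ} (hu : ∑ i, u i = 0) : pH n u = u := by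
  funext i
  simp [pH, hu]

lemma pH_const (c : ℝ) : pH n (fun _ => c) = 0 := by
  funext i
  simp only [pH, Finset.sum_const, Finset.card_univ, Fintype.card_fin, nsmul_eq_mul]
  field_simp
  simp

lemma pH_sub_const (u : Fin (n + 1) → ℝ) (c : ℝ) : pH n (u - fun _ => c) = pH n u := by
  rw [← coe_pHₗ, map_sub, coe_pHₗ, pH_const, sub_zero]

lemma dotProduct_pH_of_sum_eq_zero {x : Fin (n + 1) → ℝ} (hx : ∑ i, x i = 0)
    (u : Fin (n + 1) → ℝ) : x ⬝ᵥ pH n u = x ⬝ᵥ u := by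
  simp only [dotProduct, pH, mul_sub, Finset.sum_sub_distrib, ← Finset.sum_mul, hx, zero_mul,
    sub_zero]

end Projection

section IntegerVectors

variable {ι : Type*} [Fintype ι]

lemma mem_span_basisFun_iff (u : ι → ℝ) :
    u ∈ Submodule.span ℤ (range (Pi.basisFun ℝ ι)) ↔ ∀ i, ∃ m : ℤ, u i = m := by
  simp [Module.Basis.mem_span_iff_repr_mem, eq_comm]

lemma exists_int_dotProduct_eq {x y : ι → ℝ} (hx : ∀ i, ∃ m : ℤ, x i = m)
    (hy : ∀ i, ∃ m : ℤ, y i = m) : ∃ m : ℤ, x ⬝ᵥ y = m := by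
  choose a ha using hx
  choose b hb using hy
  exact ⟨∑ i, a i * b i, by simp [dotProduct, ha, hb]⟩

end IntegerVectors

section Lattices

variable {n : ℕ}

lemma pH_mem_span_VPAn_of_binary {u : Fin (n + 1) → ℝ} (hu : ∀ i, u i = 0 ∨ u i = 1) :
    pH n u ∈ Submodule.span ℤ (VPAn n) := by
  by_cases h0 : u = 0
  · rw [show u = fun _ => 0 from h0, pH_const]
    exact zero_mem _
  by_cases h1 : u = fun _ => 1
  · simp [h1, pH_const]
  exact Submodule.subset_span ⟨u, ⟨hu, h0, h1⟩, rfl⟩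

lemma single_sub_single_mem_Alat (i j : Fin (n + 1)) :
    (Pi.single i 1 - Pi.single j 1 : Fin (n + 1) → ℝ) ∈ Alat n := by
  refine ⟨fun k => ⟨(Pi.single i 1 - Pi.single j 1 : Fin (n + 1) → ℤ) k, ?_⟩, ?_⟩
  · simp [Pi.single_apply]
  · simp [Finset.sum_sub_distrib]

lemma image_pH_int_eq_span :
    pH n '' {u | ∀ i, ∃ m : ℤ, u i = (m : ℝ)} =
      Submodule.span ℤ (pH n '' range (Pi.basisFun ℝ (Fin (n + 1)))) := by
  rw [← coe_pHₗ, ← LinearMap.coe_restrictScalars ℤ, ← Submodule.map_span]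
  ext u
  simp [mem_span_basisFun_iff]

lemma span_VPAn_eq_image_pH_int :
    (Submodule.span ℤ (VPAn n) : Set (Fin (n + 1) → ℝ)) =
      pH n '' {u | ∀ i, ∃ m : ℤ, u i = (m : ℝ)} := by
  rw [image_pH_int_eq_span]
  refine congrArg _ (le_antisymm (Submodule.span_le.mpr ?_) (Submodule.span_le.mpr ?_))
  · rintro _ ⟨u, ⟨hu, -⟩, rfl⟩
    rw [← image_pH_int_eq_span]
    exact mem_image_of_mem _ fun i => (hu i).elim (fun h => ⟨0, by simp [h]⟩)
      (fun h => ⟨1, by simp [h]⟩)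
  · rintro _ ⟨_, ⟨i, rfl⟩, rfl⟩
    apply pH_mem_span_VPAn_of_binary
    intro j
    by_cases h : j = i <;> simp [h]

lemma image_pH_int_eq_dual_Alat :
    pH n '' {u | ∀ i, ∃ m : ℤ, u i = (m : ℝ)} =
      {y | y ∈ Hset n ∧ ∀ x ∈ Alat n, ∃ m : ℤ, ∑ i, x i * y i = (m : ℝ)} := by
  ext y
  constructor
  · rintro ⟨u, hu, rfl⟩
    refine ⟨sum_pH u, fun x ⟨hx, hx0⟩ => ?_⟩
    rw [← dotProduct, dotProduct_pH_of_sum_eq_zero hx0]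
    exact exists_int_dotProduct_eq hx hu
  · rintro ⟨hy0, hy⟩
    refine ⟨y - fun _ => y 0, fun i => ?_, ?_⟩
    · obtain ⟨m, hm⟩ := hy _ (single_sub_single_mem_Alat i 0)
      refine ⟨m, ?_⟩
      rw [← hm, ← dotProduct, sub_dotProduct, single_dotProduct, single_dotProduct]
      simp
    · rw [pH_sub_const, pH_eq_self_of_sum_eq_zero hy0]

end Lattices

theorem vertices_span_dual_An_general (n : ℕ) :
    (Submodule.span ℤ (VPAn n) : Set (Fin (n + 1) → ℝ))
        = pH n '' {u | ∀ i, ∃ m : ℤ, u i = (m : ℝ)} ∧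
    pH n '' {u | ∀ i, ∃ m : ℤ, u i = (m : ℝ)}
        = {y | y ∈ Hset n ∧ ∀ x ∈ Alat n, ∃ m : ℤ, ∑ i, x i * y i = (m : ℝ)} :=
  ⟨span_VPAn_eq_image_pH_int, image_pH_int_eq_dual_Alat⟩

theorem vertices_span_dual_An (n : ℕ) (hn : 2 ≤ n) :
    (Submodule.span ℤ (VPAn n) : Set (Fin (n + 1) → ℝ))
        = pH n '' {u | ∀ i, ∃ m : ℤ, u i = (m : ℝ)} ∧
    pH n '' {u | ∀ i, ∃ m : ℤ, u i = (m : ℝ)}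
        = {y | y ∈ Hset n ∧ ∀ x ∈ Alat n, ∃ m : ℤ, ∑ i, x i * y i = (m : ℝ)} :=
  vertices_span_dual_An_general n
end
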